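/- arXiv:0807.2123 — 2 statements merged into one kernel-verified Lean document; each statement's English description precedes it below -/
import Mathlib

section
/- (Generalised pressure distribution principle.) Let f: X → X be a continuous transformation of a compact metric space (X,d), ψ ∈ C(X), and Z ⊆ X an arbitrary Borel set. Suppose there exist ε > 0 and s ≥ 0 such that one can find a sequence of Borel probability measures μ_k, a constant K > 0, and a weak-* limit measure ν of the sequence μ_k with ν(Z) > 0, satisfying limsup_{k→∞} μ_k(B_n(x,ε)) ≤ K·exp(−ns + S_nψ(x)) for all sufficiently large n and every ball B_n(x,ε) having non-empty intersection with Z. Then P_Z(ψ,ε) ≥ s. -/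
open MeasureTheory Filter Topology Set
open scoped ENNReal NNReal

section Preamble

variable {X : Type*}

/-- The Bowen dynamical ball `B_n(x, ε)` for the map `f`. -/
def dynBall [PseudoMetricSpace X] (f : X → X) (n : ℕ) (x : X) (ε : ℝ) : Set X :=
  {y | ∀ i < n, dist (f^[i] x) (f^[i] y) < ε}

/-- The supremum of the Birkhoff sum `S_n ψ` over the dynamical ball `B_n(x, ε)`. -/
noncomputable def supBirkhoff [PseudoMetricSpace X] (f : X → X) (ψ : X → ℝ) (n : ℕ) (x : X)
    (ε : ℝ) : ℝ :=
  sSup (birkhoffSum f ψ n '' dynBall f n x ε)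

/-- The quantity `Q(Z, α, Γ, ψ)` attached to a collection `Γ` of dynamical balls, each ball
being recorded by its centre and its length. -/
noncomputable def ppQ [PseudoMetricSpace X] (f : X → X) (ψ : X → ℝ) (ε α : ℝ)
    (Γ : Set (X × ℕ)) : ℝ≥0∞ :=
  ∑' p : Γ, ENNReal.ofReal
    (Real.exp (-α * ((↑p : X × ℕ).2 : ℝ) + supBirkhoff f ψ (↑p : X × ℕ).2 (↑p : X × ℕ).1 ε))

/-- `M(Z, α, ε, N, ψ)`: infimum of `Q` over all finite or countable covers of `Z` by dynamical
balls of length at least `N`. -/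
noncomputable def ppM [PseudoMetricSpace X] (f : X → X) (ψ : X → ℝ) (ε α : ℝ) (N : ℕ)
    (Z : Set X) : ℝ≥0∞ :=
  ⨅ (Γ : Set (X × ℕ)) (_ : Γ.Countable) (_ : Z ⊆ ⋃ p ∈ Γ, dynBall f p.2 p.1 ε)
    (_ : ∀ p ∈ Γ, N ≤ p.2), ppQ f ψ ε α Γ

/-- `m(Z, α, ε, ψ) = lim_{N → ∞} M(Z, α, ε, N, ψ)`; the limit of this nondecreasing quantity
is its supremum. -/
noncomputable def ppm [PseudoMetricSpace X] (f : X → X) (ψ : X → ℝ) (ε α : ℝ) (Z : Set X) :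
    ℝ≥0∞ :=
  ⨆ N : ℕ, ppM f ψ ε α N Z

/-- The Pesin–Pitskel pressure of `ψ` on `Z` at scale `ε`:
`P_Z(ψ, ε) = inf {α : m(Z, α, ε, ψ) = 0}`. -/
noncomputable def ppPressureAt [PseudoMetricSpace X] (f : X → X) (ψ : X → ℝ) (ε : ℝ)
    (Z : Set X) : EReal :=
  sInf {a : EReal | ∃ α : ℝ, a = (α : EReal) ∧ ppm f ψ ε α Z = 0}

/-- The Pesin–Pitskel topological pressure `P_Z(ψ) = lim_{ε → 0} P_Z(ψ, ε)` (the limit exists,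
hence equals the `limsup` as `ε → 0⁺`). -/
noncomputable def ppPressure [PseudoMetricSpace X] (f : X → X) (ψ : X → ℝ) (Z : Set X) :
    EReal :=
  limsup (fun ε : ℝ => ppPressureAt f ψ ε Z) (𝓝[>] (0 : ℝ))

/-- An `(n, ε)`-separated set for the map `f`. -/
def IsDynSeparated [PseudoMetricSpace X] (f : X → X) (n : ℕ) (ε : ℝ) (S : Set X) : Prop :=
  S.Pairwise fun x y => ∃ i < n, ε < dist (f^[i] x) (f^[i] y)

/-- The largest sum `Σ_{x ∈ S} exp (S_n ψ x)` over `(n, ε)`-separated sets `S`. -/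
noncomputable def sepSum [PseudoMetricSpace X] (f : X → X) (ψ : X → ℝ) (n : ℕ) (ε : ℝ) : ℝ :=
  sSup {r : ℝ | ∃ S : Finset X, IsDynSeparated f n ε ↑S ∧
    r = ∑ x ∈ S, Real.exp (birkhoffSum f ψ n x)}

/-- The classical topological pressure of `ψ` on the whole space, defined via separated sets:
`P(ψ) = lim_{ε → 0} limsup_{n → ∞} (1/n) log P_n(ψ, ε)` (the limit over `ε` exists by
monotonicity, hence equals the `limsup` as `ε → 0⁺`). -/
noncomputable def classicPressure [PseudoMetricSpace X] (f : X → X) (ψ : X → ℝ) : EReal :=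
  limsup (fun ε : ℝ =>
    limsup (fun n : ℕ => ((Real.log (sepSum f ψ n ε) / n : ℝ) : EReal)) atTop) (𝓝[>] (0 : ℝ))

/-- The specification property on an invariant subset `X'`. -/
def SpecificationOn [PseudoMetricSpace X] (f : X → X) (X' : Set X) : Prop :=
  ∀ ε : ℝ, 0 < ε → ∃ m : ℕ, ∀ k : ℕ, ∀ a b : Fin k → ℕ,
    (∀ j, a j ≤ b j) →
    (∀ (j : Fin k) (h : (j : ℕ) + 1 < k), b j + m ≤ a ⟨(j : ℕ) + 1, h⟩) →
    ∀ xs : Fin k → X, (∀ j, xs j ∈ X') →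
      ∃ x : X, ∀ j : Fin k, ∀ p ≤ b j - a j, dist (f^[p + a j] x) (f^[p] (xs j)) < ε

/-- The specification property. -/
def Specification [PseudoMetricSpace X] (f : X → X) : Prop :=
  SpecificationOn f Set.univ

/-- Bowen's specification property: the shadowing point can be taken to be a periodic point of
any prescribed sufficiently large least period. -/
def BowenSpecification [PseudoMetricSpace X] (f : X → X) : Prop :=
  ∀ ε : ℝ, 0 < ε → ∃ m : ℕ, ∀ k : ℕ, ∀ a b : Fin (k + 1) → ℕ,
    (∀ j, a j ≤ b j) →
    (∀ (j : Fin (k + 1)) (h : (j : ℕ) + 1 < k + 1), b j + m ≤ a ⟨(j : ℕ) + 1, h⟩) →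
    ∀ xs : Fin (k + 1) → X, ∀ p : ℕ, b (Fin.last k) - a 0 + m ≤ p →
      ∃ x : X, Function.minimalPeriod f x = p ∧
        ∀ j : Fin (k + 1), ∀ q ≤ b j - a j, dist (f^[q + a j] x) (f^[q] (xs j)) < ε

/-- The irregular set of `φ`: points where the Birkhoff average does not converge. -/
def irregularSet (f : X → X) (φ : X → ℝ) : Set X :=
  {x | ¬ ∃ c : ℝ, Tendsto (fun n : ℕ => birkhoffSum f φ n x / n) atTop (𝓝 c)}

/-- The set of values `∫ φ dμ` over `f`-invariant Borel probability measures `μ`. -/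
def invIntegrals [MeasurableSpace X] (f : X → X) (φ : X → ℝ) : Set ℝ :=
  {r | ∃ μ : Measure X, IsProbabilityMeasure μ ∧ Measure.map f μ = μ ∧ r = ∫ x, φ x ∂μ}

/-- The set of values `∫ φ dμ` over ergodic `f`-invariant Borel probability measures `μ`. -/
def ergIntegrals [MeasurableSpace X] (f : X → X) (φ : X → ℝ) : Set ℝ :=
  {r | ∃ μ : Measure X, IsProbabilityMeasure μ ∧ Ergodic f μ ∧ r = ∫ x, φ x ∂μ}

/-- The set of values `∫ φ dμ` over `f`-invariant Borel probability measures `μ` with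
`μ(X') = 1`. -/
def invIntegralsOn [MeasurableSpace X] (f : X → X) (φ : X → ℝ) (X' : Set X) : Set ℝ :=
  {r | ∃ μ : Measure X, IsProbabilityMeasure μ ∧ Measure.map f μ = μ ∧ μ X' = 1 ∧
    r = ∫ x, φ x ∂μ}

/-- A finite measurable partition of the space. -/
def IsMeasPartition [MeasurableSpace X] (P : Finset (Set X)) : Prop :=
  (∀ A ∈ P, MeasurableSet A) ∧ ⋃₀ (↑P : Set (Set X)) = Set.univ ∧
    (↑P : Set (Set X)).Pairwise Disjoint

/-- The entropy `H_μ(P ∨ f⁻¹P ∨ ⋯ ∨ f⁻⁽ⁿ⁻¹⁾P)` of the `n`-th dynamical refinement of the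
finite partition `P`. -/
noncomputable def refinedEntropy [MeasurableSpace X] (μ : Measure X) (f : X → X)
    (P : Finset (Set X)) (n : ℕ) : ℝ :=
  ∑ c : Fin n → {A // A ∈ P},
    Real.negMulLog ((μ (⋂ i : Fin n, f^[(i : ℕ)] ⁻¹' ((c i : Set X)))).toReal)

/-- The dynamical entropy of a finite partition: `lim (1/n) H_μ(⋁ f⁻ⁱP)`, which by
subadditivity equals the infimum. -/
noncomputable def entropyOfPartition [MeasurableSpace X] (μ : Measure X) (f : X → X)
    (P : Finset (Set X)) : ℝ :=
  ⨅ n : ℕ, refinedEntropy μ f P (n + 1) / ((n : ℝ) + 1)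

/-- The measure-theoretic (Kolmogorov–Sinai) entropy `h_μ(f)`. -/
noncomputable def ksEntropy [MeasurableSpace X] (μ : Measure X) (f : X → X) : EReal :=
  ⨆ (P : Finset (Set X)) (_ : IsMeasPartition P), ((entropyOfPartition μ f P : ℝ) : EReal)

/-- `sup { h_μ + ∫ ψ dμ : μ ∈ M_f(X') }`. -/
noncomputable def supEntropyPlus [PseudoMetricSpace X] [MeasurableSpace X] (f : X → X)
    (ψ : X → ℝ) (X' : Set X) : EReal :=
  ⨆ (μ : Measure X) (_ : IsProbabilityMeasure μ) (_ : Measure.map f μ = μ) (_ : μ X' = 1),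
    (ksEntropy μ f + ((∫ x, ψ x ∂μ : ℝ) : EReal))

end Preamble

/-!
If `α < s`, weak-* convergence (through the portmanteau inequality for open sets) transfers the
hypothesis on the `μ_k` to `ν(B_n(x, ε)) ≤ K e^{(α - s) N} e^{-α n + sup S_n ψ}` for every ball of
length `n ≥ N` meeting `Z`. Summing over an arbitrary cover of `Z` by such balls gives
`ν(Z) ≤ C · Q`, hence `M(Z, α, ε, N, ψ) ≥ ν(Z) / C > 0` and `m(Z, α, ε, ψ) ≠ 0`; so every `α`
with `m(Z, α, ε, ψ) = 0` is at least `s`.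
-/

section DynamicalBalls

variable {X : Type*} [PseudoMetricSpace X] {f : X → X}

theorem mem_dynBall_self (n : ℕ) (x : X) {ε : ℝ} (hε : 0 < ε) :
    x ∈ dynBall f n x ε := fun i _ => by simpa using hε

theorem isOpen_dynBall (hf : Continuous f) (n : ℕ) (x : X) (ε : ℝ) :
    IsOpen (dynBall f n x ε) := by
  have : dynBall f n x ε = ⋂ i ∈ Finset.range n, f^[i] ⁻¹' Metric.ball (f^[i] x) ε := by
    ext y; simp [dynBall, Metric.mem_ball, dist_comm]
  rw [this]
  exact isOpen_biInter_finset fun i _ => Metric.isOpen_ball.preimage (hf.iterate i)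

theorem birkhoffSum_le_supBirkhoff [CompactSpace X] (hf : Continuous f) {ψ : X → ℝ}
    (hψ : Continuous ψ) (n : ℕ) (x : X) {ε : ℝ} (hε : 0 < ε) :
    birkhoffSum f ψ n x ≤ supBirkhoff f ψ n x ε := by
  have hc : Continuous (birkhoffSum f ψ n) :=
    continuous_finsetSum _ fun i _ => hψ.comp (hf.iterate i)
  exact le_csSup ((isCompact_range hc).bddAbove.mono (image_subset_range _ _))
    ⟨x, mem_dynBall_self n x hε, rfl⟩

end DynamicalBalls

section MassDistribution

variable {X : Type*} [PseudoMetricSpace X] [MeasurableSpace X] {f : X → X} {ψ : X → ℝ}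
  {ε α : ℝ} {Z : Set X} (ν : Measure X) (C : ℝ≥0∞)

theorem measure_le_mul_ppQ {Γ : Set (X × ℕ)} (hΓ : Γ.Countable)
    (hcov : Z ⊆ ⋃ p ∈ Γ, dynBall f p.2 p.1 ε)
    (hball : ∀ p ∈ Γ, (dynBall f p.2 p.1 ε ∩ Z).Nonempty → ν (dynBall f p.2 p.1 ε) ≤
      C * ENNReal.ofReal (Real.exp (-α * p.2 + supBirkhoff f ψ p.2 p.1 ε))) :
    ν Z ≤ C * ppQ f ψ ε α Γ := by
  have hterm : ∀ p ∈ Γ, ν (Z ∩ dynBall f p.2 p.1 ε) ≤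
      C * ENNReal.ofReal (Real.exp (-α * p.2 + supBirkhoff f ψ p.2 p.1 ε)) := by
    intro p hp
    by_cases hmeet : (dynBall f p.2 p.1 ε ∩ Z).Nonempty
    · exact (measure_mono inter_subset_right).trans (hball p hp hmeet)
    · rw [inter_comm, not_nonempty_iff_eq_empty.mp hmeet, measure_empty]
      exact zero_le
  calc ν Z ≤ ν (⋃ p ∈ Γ, Z ∩ dynBall f p.2 p.1 ε) := by
        rw [← inter_iUnion₂]; exact measure_mono (subset_inter subset_rfl hcov)
    _ ≤ ∑' p : Γ, ν (Z ∩ dynBall f (p : X × ℕ).2 (p : X × ℕ).1 ε) := measure_biUnion_le ν hΓ _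
    _ ≤ ∑' p : Γ, C * ENNReal.ofReal
          (Real.exp (-α * (p : X × ℕ).2 + supBirkhoff f ψ (p : X × ℕ).2 (p : X × ℕ).1 ε)) :=
        ENNReal.tsum_le_tsum fun p => hterm p p.2
    _ = C * ppQ f ψ ε α Γ := ENNReal.tsum_mul_left

theorem measure_div_le_ppM {N : ℕ}
    (hball : ∀ n, N ≤ n → ∀ x, (dynBall f n x ε ∩ Z).Nonempty → ν (dynBall f n x ε) ≤
      C * ENNReal.ofReal (Real.exp (-α * n + supBirkhoff f ψ n x ε))) :
    ν Z / C ≤ ppM f ψ ε α N Z :=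
  le_iInf fun _ => le_iInf fun hΓ => le_iInf fun hcov => le_iInf fun hN =>
    ENNReal.div_le_of_le_mul' <|
      measure_le_mul_ppQ ν C hΓ hcov fun p hp => hball p.2 (hN p hp) p.1

end MassDistribution

open scoped BoundedContinuousFunction in
theorem measure_le_limsup_measure_of_tendsto_integral {X : Type*} [TopologicalSpace X]
    [MeasurableSpace X] [OpensMeasurableSpace X] [HasOuterApproxClosed X]
    {μs : ℕ → Measure X} [∀ k, IsProbabilityMeasure (μs k)] {ν : Measure X}
    [IsProbabilityMeasure ν] {σ : ℕ → ℕ} (hσ : StrictMono σ)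
    (hlim : ∀ g : X →ᵇ ℝ, Tendsto (fun k => ∫ x, g x ∂(μs (σ k))) atTop (𝓝 (∫ x, g x ∂ν)))
    {G : Set X} (hG : IsOpen G) :
    ν G ≤ limsup (fun k => μs k G) atTop := by
  let P : ℕ → ProbabilityMeasure X := fun k => ⟨μs (σ k), inferInstance⟩
  have hP : Tendsto P atTop (𝓝 ⟨ν, inferInstance⟩) :=
    ProbabilityMeasure.tendsto_iff_forall_integral_tendsto.mpr hlim
  calc ν G ≤ liminf (fun k => μs (σ k) G) atTop :=
        ProbabilityMeasure.le_liminf_measure_open_of_tendsto hP hG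
    _ ≤ limsup (fun k => μs (σ k) G) atTop := liminf_le_limsup
    _ ≤ limsup (fun k => μs k G) atTop :=
        hσ.tendsto_atTop.limsup_comp_le_limsup (u := fun k => μs k G)

theorem ofReal_mul_exp_le_of_le {K α s S S' : ℝ} {N n : ℕ} (hαs : α ≤ s) (hn : N ≤ n)
    (hS : S ≤ S') :
    ENNReal.ofReal (K * Real.exp (-(n : ℝ) * s + S)) ≤
      ENNReal.ofReal K * ENNReal.ofReal (Real.exp ((α - s) * N)) *
        ENNReal.ofReal (Real.exp (-α * n + S')) := by
  rw [ENNReal.ofReal_mul' (Real.exp_pos _).le, mul_assoc,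
    ← ENNReal.ofReal_mul (Real.exp_pos _).le, ← Real.exp_add]
  have hn' : (N : ℝ) ≤ n := Nat.cast_le.mpr hn
  refine mul_le_mul_right (ENNReal.ofReal_le_ofReal (Real.exp_le_exp.mpr ?_)) _
  nlinarith

theorem generalised_pressure_distribution_principle_general {X : Type*} [MetricSpace X]
    [CompactSpace X] [MeasurableSpace X] [BorelSpace X]
    (f : X → X) (hf : Continuous f) (ψ : X → ℝ) (hψ : Continuous ψ)
    (Z : Set X)
    (ε s : ℝ) (hε : 0 < ε)
    (μs : ℕ → MeasureTheory.Measure X) (hμs : ∀ k, MeasureTheory.IsProbabilityMeasure (μs k))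
    (K : ℝ)
    (ν : MeasureTheory.Measure X) (hν : MeasureTheory.IsProbabilityMeasure ν)
    (σ : ℕ → ℕ) (hσ : StrictMono σ)
    (hlim : ∀ h : X → ℝ, Continuous h →
      Filter.Tendsto (fun k => ∫ x, h x ∂(μs (σ k))) Filter.atTop (nhds (∫ x, h x ∂ν)))
    (hνZ : 0 < ν Z)
    (hball : ∃ N : ℕ, ∀ n : ℕ, N ≤ n → ∀ x : X, (dynBall f n x ε ∩ Z).Nonempty →
      Filter.limsup (fun k => μs k (dynBall f n x ε)) Filter.atTop ≤
        ENNReal.ofReal (K * Real.exp (-(n : ℝ) * s + birkhoffSum f ψ n x))) :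
    (s : EReal) ≤ ppPressureAt f ψ ε Z := by
  refine le_sInf ?_
  rintro _ ⟨α, rfl, hα⟩
  rw [EReal.coe_le_coe_iff]
  by_contra! hαs
  obtain ⟨N, hN⟩ := hball
  set C := ENNReal.ofReal K * ENNReal.ofReal (Real.exp ((α - s) * N))
  have hνball : ∀ n, N ≤ n → ∀ x, (dynBall f n x ε ∩ Z).Nonempty → ν (dynBall f n x ε) ≤
      C * ENNReal.ofReal (Real.exp (-α * n + supBirkhoff f ψ n x ε)) := fun n hn x hmeet =>
    (measure_le_limsup_measure_of_tendsto_integral hσ (fun g => hlim g g.continuous)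
      (isOpen_dynBall hf n x ε)).trans <| (hN n hn x hmeet).trans <|
        ofReal_mul_exp_le_of_le hαs.le hn (birkhoffSum_le_supBirkhoff hf hψ n x hε)
  have hdiv : ν Z / C = 0 :=
    le_antisymm ((measure_div_le_ppM ν C hνball).trans (hα ▸ le_iSup (ppM f ψ ε α · Z) N))
      zero_le
  rcases ENNReal.div_eq_zero_iff.mp hdiv with hνZ0 | hCtop
  · exact hνZ.ne' hνZ0
  · exact ENNReal.mul_ne_top ENNReal.ofReal_ne_top ENNReal.ofReal_ne_top hCtop

/-- **Generalised pressure distribution principle.** Let `ε > 0` and `s ≥ 0`. Suppose there is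
a sequence of Borel probability measures `μ_k`, a constant `K > 0`, and a weak-* limit measure
`ν` of (a subsequence of) the sequence `μ_k` with `ν(Z) > 0`, such that
`limsup_k μ_k(B_n(x, ε)) ≤ K exp(−ns + S_n ψ(x))` for all sufficiently large `n` and every
dynamical ball meeting `Z`. Then `P_Z(ψ, ε) ≥ s`. -/
theorem generalised_pressure_distribution_principle {X : Type*} [MetricSpace X]
    [CompactSpace X] [MeasurableSpace X] [BorelSpace X]
    (f : X → X) (hf : Continuous f) (ψ : X → ℝ) (hψ : Continuous ψ)
    (Z : Set X) (hZ : MeasurableSet Z)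
    (ε s : ℝ) (hε : 0 < ε) (hs : 0 ≤ s)
    (μs : ℕ → MeasureTheory.Measure X) (hμs : ∀ k, MeasureTheory.IsProbabilityMeasure (μs k))
    (K : ℝ) (hK : 0 < K)
    (ν : MeasureTheory.Measure X) (hν : MeasureTheory.IsProbabilityMeasure ν)
    (σ : ℕ → ℕ) (hσ : StrictMono σ)
    (hlim : ∀ h : X → ℝ, Continuous h →
      Filter.Tendsto (fun k => ∫ x, h x ∂(μs (σ k))) Filter.atTop (nhds (∫ x, h x ∂ν)))
    (hνZ : 0 < ν Z)
    (hball : ∃ N : ℕ, ∀ n : ℕ, N ≤ n → ∀ x : X, (dynBall f n x ε ∩ Z).Nonempty →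
      Filter.limsup (fun k => μs k (dynBall f n x ε)) Filter.atTop ≤
        ENNReal.ofReal (K * Real.exp (-(n : ℝ) * s + birkhoffSum f ψ n x))) :
    (s : EReal) ≤ ppPressureAt f ψ ε Z :=
  generalised_pressure_distribution_principle_general f hf ψ hψ Z ε s hε μs hμs K ν hν σ hσ hlim hνZ
    hball
end

section
/- Let (X,d) be a compact metric space, f: X → X a continuous map, and φ ∈ C(X). The following are equivalent: (i) (1/n) S_nφ converges uniformly on X to some constant c; (ii) φ ∈ ⋃_{c∈ℝ} cl(Cob(X,f,c)), i.e. φ lies in the sup-norm closure of the functions cohomologous to some constant; (iii) ∫φ dμ takes the same value for all μ ∈ M_f(X), i.e. inf_{μ ∈ M_f(X)} ∫φ dμ = sup_{μ ∈ M_f(X)} ∫φ dμ. -/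
open MeasureTheory Filter Topology Set
open scoped ENNReal NNReal

/-!
Write `A_n φ = (1/n) S_n φ`. Each `A_n` is a 1-Lipschitz operator on `C(X)`, so the set of `φ`
with `A_n φ → c` uniformly is closed; it contains every `c + h - h ∘ f`, since
`A_n (h - h ∘ f) = (h - h ∘ f^[n]) / n`. Conversely `φ - A_n φ` is the coboundary of
`(1/n) ∑_{k<n} S_k φ`, so `A_n φ → c` exhibits `φ` as the limit of `φ - A_n φ + c ∈ Cob(c)`.
Invariant measures integrate every element of `Cob(c)` to `c`, and integration is continuous in
the sup norm, which gives (ii) ⇒ (iii). For (iii) ⇒ (i): if `A_n φ` does not converge uniformly to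
the common value `c`, there are points `x_k` and times `n_k → ∞` with `|A_{n_k} φ (x_k) - c| ≥ ε`;
a weak-* limit of the empirical measures `(1/n_k) ∑_{i<n_k} δ_{f^i x_k}` is invariant
(Krylov–Bogolyubov) and integrates `φ` to a value at distance at least `ε` from `c`.
-/

section BirkhoffSum

variable {α M : Type*}

theorem continuous_birkhoffSum [TopologicalSpace α] [TopologicalSpace M] [AddCommMonoid M]
    [ContinuousAdd M] {f : α → α} {g : α → M} (hf : Continuous f) (hg : Continuous g) (n : ℕ) :
    Continuous (birkhoffSum f g n) :=
  continuous_finsetSum _ fun k _ => hg.comp (hf.iterate k)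

theorem birkhoffSum_comp_self [AddCommMonoid M] (f : α → α) (g : α → M) (n : ℕ) (x : α) :
    birkhoffSum f (g ∘ f) n x = birkhoffSum f g n (f x) := by
  simp only [birkhoffSum, Function.comp_apply, ← Function.iterate_succ_apply,
    Function.iterate_succ_apply']

theorem birkhoffAverage_comp_self (R : Type*) [DivisionSemiring R] [AddCommMonoid M] [Module R M]
    (f : α → α) (g : α → M) (n : ℕ) (x : α) :
    birkhoffAverage R f (g ∘ f) n x = birkhoffAverage R f g n (f x) := by
  rw [birkhoffAverage, birkhoffAverage, birkhoffSum_comp_self]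

theorem birkhoffSum_div_natCast (f : α → α) (g : α → ℝ) (n : ℕ) (x : α) :
    birkhoffSum f g n x / n = birkhoffAverage ℝ f g n x := by
  rw [birkhoffAverage, smul_eq_mul, div_eq_inv_mul]

theorem norm_birkhoffAverage_le [NormedAddCommGroup M] [NormedSpace ℝ M] (f : α → α)
    (g : α → M) {C : ℝ} (hC : ∀ y, ‖g y‖ ≤ C) (n : ℕ) (x : α) :
    ‖birkhoffAverage ℝ f g n x‖ ≤ C := by
  rcases eq_or_ne n 0 with rfl | hn
  · simpa using (norm_nonneg _).trans (hC x)
  calc ‖birkhoffAverage ℝ f g n x‖ = (n : ℝ)⁻¹ * ‖birkhoffSum f g n x‖ := by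
        rw [birkhoffAverage, norm_smul, norm_inv, Real.norm_natCast]
    _ ≤ (n : ℝ)⁻¹ * (n * C) := by
        gcongr
        refine (norm_sum_le _ _).trans ?_
        simpa using Finset.sum_le_card_nsmul (Finset.range n) _ _ fun k _ => hC (f^[k] x)
    _ = C := by field_simp

theorem dist_birkhoffAverage_apply_birkhoffAverage_le [NormedAddCommGroup M] [NormedSpace ℝ M]
    (f : α → α) (g : α → M) {C : ℝ} (hC : ∀ y, ‖g y‖ ≤ C) (n : ℕ) (x : α) :
    dist (birkhoffAverage ℝ f g n (f x)) (birkhoffAverage ℝ f g n x) ≤ 2 * C / n := by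
  rw [dist_birkhoffAverage_apply_birkhoffAverage]
  gcongr
  exact (dist_le_norm_add_norm _ _).trans (two_mul C ▸ add_le_add (hC _) (hC _))

theorem sub_birkhoffAverage_eq (R : Type*) [DivisionRing R] [CharZero R] [AddCommGroup M]
    [Module R M] (f : α → α) (g : α → M) {n : ℕ} (hn : n ≠ 0) (x : α) :
    g x - birkhoffAverage R f g n x =
      (n : R)⁻¹ • ∑ k ∈ Finset.range n, birkhoffSum f g k x -
        (n : R)⁻¹ • ∑ k ∈ Finset.range n, birkhoffSum f g k (f x) := by
  have hsum : ∑ k ∈ Finset.range n, birkhoffSum f g k (f x) -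
      ∑ k ∈ Finset.range n, birkhoffSum f g k x = birkhoffSum f g n x - n • g x := by
    rw [← Finset.sum_sub_distrib]
    simp only [birkhoffSum_apply_sub_birkhoffSum]
    rw [Finset.sum_sub_distrib, Finset.sum_const, Finset.card_range]
    rfl
  rw [← smul_sub, ← neg_sub (∑ k ∈ Finset.range n, birkhoffSum f g k (f x)), hsum, smul_neg,
    birkhoffAverage, smul_sub, ← Nat.cast_smul_eq_nsmul R, smul_smul,
    inv_mul_cancel₀ (Nat.cast_ne_zero.2 hn), one_smul, neg_sub]

end BirkhoffSum

namespace ContinuousMap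

variable {X : Type*} [TopologicalSpace X]

def cohomologousToConst (f : C(X, X)) (c : ℝ) : Set C(X, ℝ) :=
  {g | ∃ h : C(X, ℝ), g = const X c + h - h.comp f}

noncomputable def birkhoffAverage (f : C(X, X)) (n : ℕ) (φ : C(X, ℝ)) : C(X, ℝ) :=
  ⟨_root_.birkhoffAverage ℝ f φ n,
    (continuous_birkhoffSum f.continuous φ.continuous n).const_smul (n : ℝ)⁻¹⟩

@[simp]
theorem coe_birkhoffAverage (f : C(X, X)) (n : ℕ) (φ : C(X, ℝ)) :
    ⇑(f.birkhoffAverage n φ) = _root_.birkhoffAverage ℝ f φ n :=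
  rfl

variable [CompactSpace X] (f : C(X, X))

theorem lipschitzWith_birkhoffAverage (n : ℕ) : LipschitzWith 1 (f.birkhoffAverage n) :=
  LipschitzWith.of_dist_le_mul fun φ ψ => by
    rw [NNReal.coe_one, one_mul, dist_le dist_nonneg]
    intro x
    simp only [coe_birkhoffAverage, dist_eq_norm, ← Pi.sub_apply, ← birkhoffAverage_sub]
    exact norm_birkhoffAverage_le _ _ (fun y => (φ - ψ).norm_coe_le_norm y) n x

theorem isClosed_setOfPred_tendsto_birkhoffAverage (c : ℝ) :
    IsClosed {φ | Tendsto (f.birkhoffAverage · φ) atTop (𝓝 (const X c))} :=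
  (LipschitzWith.uniformEquicontinuous _ 1 f.lipschitzWith_birkhoffAverage).equicontinuous
    |>.isClosed_setOfPred_tendsto continuous_const

theorem tendsto_birkhoffAverage_of_mem_cohomologousToConst {c : ℝ} {g : C(X, ℝ)}
    (hg : g ∈ f.cohomologousToConst c) :
    Tendsto (f.birkhoffAverage · g) atTop (𝓝 (const X c)) := by
  obtain ⟨h, rfl⟩ := hg
  have hbound : ∀ n ≠ 0, dist (f.birkhoffAverage n (const X c + h - h.comp f)) (const X c)
      ≤ 2 * ‖h‖ / n := by
    intro n hn
    have hconst : _root_.birkhoffAverage ℝ f (const X c) n = const X c :=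
      birkhoffAverage_of_comp_eq ℝ rfl (Nat.cast_ne_zero.2 hn)
    refine (dist_le (by positivity)).2 fun x => ?_
    simp only [coe_birkhoffAverage, coe_sub, coe_add, coe_comp, birkhoffAverage_sub,
      birkhoffAverage_add, hconst, Pi.sub_apply, Pi.add_apply, birkhoffAverage_comp_self,
      const_apply, add_sub_assoc]
    rw [dist_comm, dist_self_add_right, ← dist_eq_norm, dist_comm]
    exact dist_birkhoffAverage_apply_birkhoffAverage_le f h h.norm_coe_le_norm n x
  refine tendsto_iff_dist_tendsto_zero.2 (squeeze_zero' (Eventually.of_forall fun _ => dist_nonneg)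
    ((eventually_ne_atTop 0).mono hbound) ?_)
  exact tendsto_const_nhds.div_atTop tendsto_natCast_atTop_atTop

theorem tendsto_birkhoffAverage_of_mem_closure {c : ℝ} {φ : C(X, ℝ)}
    (hφ : φ ∈ closure (f.cohomologousToConst c)) :
    Tendsto (f.birkhoffAverage · φ) atTop (𝓝 (const X c)) :=
  closure_minimal (fun _ => f.tendsto_birkhoffAverage_of_mem_cohomologousToConst)
    (f.isClosed_setOfPred_tendsto_birkhoffAverage c) hφ

theorem mem_closure_cohomologousToConst_of_tendsto {c : ℝ} {φ : C(X, ℝ)}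
    (hφ : Tendsto (f.birkhoffAverage · φ) atTop (𝓝 (const X c))) :
    φ ∈ closure (f.cohomologousToConst c) := by
  have hmem : ∀ n ≠ 0, φ - f.birkhoffAverage n φ + const X c ∈ f.cohomologousToConst c := by
    intro n hn
    refine ⟨⟨fun x => (n : ℝ)⁻¹ • ∑ k ∈ Finset.range n, birkhoffSum f φ k x,
      (continuous_finsetSum _ fun k _ =>
        continuous_birkhoffSum f.continuous φ.continuous k).const_smul (n : ℝ)⁻¹⟩, ?_⟩
    ext x
    have := sub_birkhoffAverage_eq ℝ f φ hn x
    simp only [coe_birkhoffAverage, coe_add, coe_sub, Pi.add_apply, Pi.sub_apply, const_apply,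
      comp_apply, coe_mk] at this ⊢
    linarith
  refine mem_closure_of_tendsto ?_ ((eventually_ne_atTop 0).mono hmem)
  simpa using (tendsto_const_nhds.sub hφ).add_const (const X c)

end ContinuousMap

section InvariantIntegral

variable {X : Type*} [MeasurableSpace X] {μ : Measure X}

theorem integral_comp_eq_of_map_eq {f : X → X} (hf : AEMeasurable f μ) (hμ : μ.map f = μ)
    {g : X → ℝ} (hg : AEStronglyMeasurable g μ) :
    ∫ x, g (f x) ∂μ = ∫ x, g x ∂μ := by
  rw [← integral_map hf (hμ.symm ▸ hg), hμ]

variable [TopologicalSpace X] [CompactSpace X]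

theorem abs_integral_le_norm [IsProbabilityMeasure μ] (g : C(X, ℝ)) :
    |∫ x, g x ∂μ| ≤ ‖g‖ := by
  simpa using norm_integral_le_of_norm_le_const (μ := μ) (Eventually.of_forall g.norm_coe_le_norm)

theorem invIntegrals_subset_Icc (f : X → X) (φ : C(X, ℝ)) :
    invIntegrals f φ ⊆ Icc (-‖φ‖) ‖φ‖ := by
  rintro _ ⟨μ, hμ, -, rfl⟩
  exact abs_le.1 (abs_integral_le_norm φ)

variable [OpensMeasurableSpace X]

theorem ContinuousMap.integrable [IsFiniteMeasure μ] (g : C(X, ℝ)) : Integrable g μ :=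
  g.continuous.integrable_of_hasCompactSupport (HasCompactSupport.of_compactSpace _)

variable [IsProbabilityMeasure μ]

theorem lipschitzWith_integral : LipschitzWith 1 fun g : C(X, ℝ) => ∫ x, g x ∂μ :=
  LipschitzWith.of_dist_le_mul fun g g' => by
    rw [NNReal.coe_one, one_mul, Real.dist_eq, ← integral_sub g.integrable g'.integrable,
      dist_eq_norm]
    exact abs_integral_le_norm (g - g')

variable [BorelSpace X] {f : C(X, X)} (hμ : μ.map f = μ) {c : ℝ}
include hμ

theorem integral_eq_of_mem_cohomologousToConst {g : C(X, ℝ)}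
    (hg : g ∈ f.cohomologousToConst c) : ∫ x, g x ∂μ = c := by
  obtain ⟨h, rfl⟩ := hg
  have hinv : ∫ x, h (f x) ∂μ = ∫ x, h x ∂μ :=
    integral_comp_eq_of_map_eq f.continuous.aemeasurable hμ h.continuous.aestronglyMeasurable
  simp only [ContinuousMap.coe_sub, ContinuousMap.coe_add, ContinuousMap.coe_comp,
    Pi.sub_apply, Pi.add_apply, ContinuousMap.const_apply, Function.comp_apply]
  rw [integral_sub (f := fun x => c + h x) (g := fun x => h (f x))
      ((integrable_const c).add h.integrable) (h.comp f).integrable,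
    integral_add (integrable_const c) h.integrable, hinv]
  simp

theorem integral_eq_of_mem_closure_cohomologousToConst {φ : C(X, ℝ)}
    (hφ : φ ∈ closure (f.cohomologousToConst c)) : ∫ x, φ x ∂μ = c :=
  closure_minimal (fun _ => integral_eq_of_mem_cohomologousToConst hμ)
    (isClosed_eq lipschitzWith_integral.continuous continuous_const) hφ

end InvariantIntegral

section EmpiricalMeasure

variable {X : Type*} [MeasurableSpace X]

noncomputable def empiricalMeasure (f : X → X) (n : ℕ) (x : X) : Measure X :=
  (n : ℝ≥0∞)⁻¹ • ∑ k ∈ Finset.range n, Measure.dirac (f^[k] x)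

theorem isProbabilityMeasure_empiricalMeasure (f : X → X) {n : ℕ} (hn : n ≠ 0) (x : X) :
    IsProbabilityMeasure (empiricalMeasure f n x) :=
  ⟨by simp [empiricalMeasure, ENNReal.inv_mul_cancel (Nat.cast_ne_zero.2 hn)]⟩

theorem integral_empiricalMeasure [MeasurableSingletonClass X] {E : Type*} [NormedAddCommGroup E]
    [NormedSpace ℝ E] [CompleteSpace E] (f : X → X) (g : X → E) (n : ℕ) (x : X) :
    ∫ y, g y ∂(empiricalMeasure f n x) = birkhoffAverage ℝ f g n x := by
  rw [empiricalMeasure, integral_smul_measure,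
    integral_finsetSum_measure fun k _ => integrable_dirac enorm_lt_top]
  simp [birkhoffAverage, birkhoffSum]

end EmpiricalMeasure

open scoped BoundedContinuousFunction

section KrylovBogolyubov

variable {X : Type*} [MetricSpace X] [MeasurableSpace X] [BorelSpace X] {f : X → X}

theorem map_eq_of_tendsto_birkhoffAverage (hf : Continuous f) {μ : Measure X} [IsFiniteMeasure μ]
    {ι : Type*} {l : Filter ι} [l.NeBot] {n : ι → ℕ} (hn : Tendsto n l atTop) {x : ι → X}
    (hμ : ∀ g : X →ᵇ ℝ,
      Tendsto (fun i => birkhoffAverage ℝ f g (n i) (x i)) l (𝓝 (∫ y, g y ∂μ))) :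
    μ.map f = μ := by
  refine ext_of_forall_integral_eq_of_IsFiniteMeasure fun g => ?_
  rw [integral_map hf.aemeasurable g.continuous.aestronglyMeasurable]
  refine tendsto_nhds_unique (hμ (g.compContinuous ⟨f, hf⟩)) ?_
  have hshift : Tendsto (fun i => dist (birkhoffAverage ℝ f g (n i) (x i))
      (birkhoffAverage ℝ f g (n i) (f (x i)))) l (𝓝 0) :=
    squeeze_zero (fun _ => dist_nonneg) (fun i => (dist_comm _ _).trans_le
        (dist_birkhoffAverage_apply_birkhoffAverage_le f g g.norm_coe_le_norm _ _))
      ((tendsto_const_nhds.div_atTop tendsto_natCast_atTop_atTop).comp hn)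
  refine ((hμ g).congr_dist hshift).congr fun i => ?_
  rw [← birkhoffAverage_comp_self]
  rfl

variable [CompactSpace X]

theorem exists_tendsto_birkhoffAverage (f : X → X) {ι : Type*} (u : Ultrafilter ι) {n : ι → ℕ}
    (hn : ∀ i, n i ≠ 0) (x : ι → X) :
    ∃ μ : Measure X, IsProbabilityMeasure μ ∧ ∀ g : X →ᵇ ℝ,
      Tendsto (fun i => birkhoffAverage ℝ f g (n i) (x i)) u (𝓝 (∫ y, g y ∂μ)) := by
  let ν : ι → ProbabilityMeasure X := fun i =>
    ⟨empiricalMeasure f (n i) (x i), isProbabilityMeasure_empiricalMeasure f (hn i) (x i)⟩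
  refine ⟨(u.map ν).lim, inferInstance, fun g => ?_⟩
  simpa [ν, integral_empiricalMeasure] using
    ProbabilityMeasure.tendsto_iff_forall_integral_tendsto.1 (u.map ν).le_nhds_lim g

theorem exists_invariant_integral_mem_of_frequently (hf : Continuous f) (φ : C(X, ℝ))
    {F : Set ℝ} (hF : IsClosed F) (h : ∃ᶠ n in atTop, ∃ x, birkhoffAverage ℝ f φ n x ∈ F) :
    ∃ μ : Measure X, IsProbabilityMeasure μ ∧ μ.map f = μ ∧ ∫ x, φ x ∂μ ∈ F := by
  obtain ⟨n, hn_mono, hn⟩ :=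
    extraction_of_frequently_atTop (h.and_eventually (eventually_ne_atTop 0))
  choose x hx using fun k => (hn k).1
  let u := Ultrafilter.of (atTop : Filter ℕ)
  obtain ⟨μ, hμ, hlim⟩ := exists_tendsto_birkhoffAverage f u (fun k => (hn k).2) x
  have hn_tendsto : Tendsto n u atTop := hn_mono.tendsto_atTop.mono_left (Ultrafilter.of_le _)
  exact ⟨μ, hμ, map_eq_of_tendsto_birkhoffAverage hf hn_tendsto hlim,
    hF.mem_of_tendsto (hlim (.mkOfCompact φ)) (Eventually.of_forall hx)⟩

end KrylovBogolyubov

section Equivalence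

variable {X : Type*} [MetricSpace X] [CompactSpace X]

theorem tendstoUniformly_birkhoffSum_div_iff (f : C(X, X)) (φ : C(X, ℝ)) (c : ℝ) :
    TendstoUniformly (fun n : ℕ => fun x : X => birkhoffSum f φ n x / n) (fun _ => c) atTop ↔
      Tendsto (f.birkhoffAverage · φ) atTop (𝓝 (ContinuousMap.const X c)) := by
  simp only [ContinuousMap.tendsto_iff_tendstoUniformly, ContinuousMap.coe_birkhoffAverage,
    birkhoffSum_div_natCast]
  rfl

theorem sInf_eq_sSup_invIntegrals_of_mem_closure [MeasurableSpace X] [BorelSpace X] {f : X → X}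
    (hf : Continuous f) {φ : C(X, ℝ)} {c : ℝ}
    (hφ : φ ∈ closure (ContinuousMap.cohomologousToConst ⟨f, hf⟩ c)) :
    sInf (invIntegrals f φ) = sSup (invIntegrals f φ) := by
  have hsub : invIntegrals f φ ⊆ {c} := by
    rintro _ ⟨μ, hμ, hmap, rfl⟩
    exact integral_eq_of_mem_closure_cohomologousToConst hmap hφ
  rcases subset_singleton_iff_eq.1 hsub with h | h <;> simp [h]

theorem tendsto_birkhoffAverage_of_sInf_eq_sSup [MeasurableSpace X] [BorelSpace X] {f : X → X}
    (hf : Continuous f) (φ : C(X, ℝ)) (h : sInf (invIntegrals f φ) = sSup (invIntegrals f φ)) :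
    Tendsto ((⟨f, hf⟩ : C(X, X)).birkhoffAverage · φ) atTop
      (𝓝 (ContinuousMap.const X (sInf (invIntegrals f φ)))) := by
  set c := sInf (invIntegrals f φ)
  refine Metric.tendsto_nhds.2 fun ε hε => ?_
  by_contra hfar
  have hfreq : ∃ᶠ n in atTop, ∃ x, birkhoffAverage ℝ f φ n x ∈ {r | ε ≤ dist r c} := by
    refine (not_eventually.1 hfar).mono fun n hn => ?_
    simpa [ContinuousMap.dist_lt_iff hε] using hn
  obtain ⟨μ, hμ, hmap, hfar_μ⟩ := exists_invariant_integral_mem_of_frequently hf φ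
    (F := {r | ε ≤ dist r c}) (isClosed_le continuous_const (continuous_id.dist continuous_const))
    hfreq
  have hbdd := invIntegrals_subset_Icc f φ
  have hmem : ∫ x, φ x ∂μ ∈ invIntegrals f φ := ⟨μ, hμ, hmap, rfl⟩
  have heq : ∫ x, φ x ∂μ = c :=
    le_antisymm (h ▸ le_csSup (bddAbove_Icc.mono hbdd) hmem)
      (csInf_le (bddBelow_Icc.mono hbdd) hmem)
  have hfar_c : ε ≤ dist c c := heq ▸ hfar_μ
  rw [dist_self] at hfar_c
  linarith

end Equivalence

/-- For a continuous map `f` of a compact metric space and continuous `φ`, the following are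
equivalent: (i) the Birkhoff averages `(1/n) S_n φ` converge uniformly to a constant;
(ii) `φ` lies in the sup-norm closure of the functions cohomologous to some constant;
(iii) all integrals of `φ` against `f`-invariant Borel probability measures coincide. -/
theorem uniform_convergence_iff_cohomologous_iff_unique_integral {X : Type*} [MetricSpace X]
    [CompactSpace X] [MeasurableSpace X] [BorelSpace X]
    (f : X → X) (hf : Continuous f) (φ : C(X, ℝ)) :
    ((∃ c : ℝ, TendstoUniformly (fun n : ℕ => fun x : X => birkhoffSum f (⇑φ) n x / n)
        (fun _ => c) Filter.atTop) ↔
      (∃ c : ℝ, φ ∈ closure {g : C(X, ℝ) | ∃ h : C(X, ℝ),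
        g = ContinuousMap.const X c + h - h.comp ⟨f, hf⟩})) ∧
    ((∃ c : ℝ, φ ∈ closure {g : C(X, ℝ) | ∃ h : C(X, ℝ),
        g = ContinuousMap.const X c + h - h.comp ⟨f, hf⟩}) ↔
      sInf (invIntegrals f ⇑φ) = sSup (invIntegrals f ⇑φ)) := by
  set F : C(X, X) := ⟨f, hf⟩
  have h_i_iff (c : ℝ) := tendstoUniformly_birkhoffSum_div_iff F φ c
  refine ⟨⟨fun ⟨c, hc⟩ => ⟨c, ?_⟩, fun ⟨c, hc⟩ => ⟨c, ?_⟩⟩,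
    ⟨fun ⟨c, hc⟩ => sInf_eq_sSup_invIntegrals_of_mem_closure hf hc,
      fun h => ⟨sInf (invIntegrals f φ), ?_⟩⟩⟩
  · exact F.mem_closure_cohomologousToConst_of_tendsto ((h_i_iff c).1 hc)
  · exact (h_i_iff c).2 (F.tendsto_birkhoffAverage_of_mem_closure hc)
  · exact F.mem_closure_cohomologousToConst_of_tendsto
      (tendsto_birkhoffAverage_of_sInf_eq_sSup hf φ h)
end
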